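/- For all i ≥ 0 and j ≥ 0, the word u = a^i · (ba) · b^j · ā · b rewrites under ⇒* to a^i b^{j+2}, whose reversal b^{j+2} a^i is reachable from it by →*; hence u·ū satisfies the crossing condition. -/

import Mathlib

/-- The four-letter alphabet `{a, b, ā, b̄}`; `A` stands for `ā` and `B` for `b̄`. -/
inductive L : Type
  | a | b | A | B
deriving DecidableEq

/-- The antiparallel letter: `a ↔ ā`, `b ↔ b̄`. -/
def bar : L → L
  | .a => .A
  | .A => .a
  | .b => .B
  | .B => .b

/-- Letterwise application of the involution `a ↔ ā`, `b ↔ b̄` to a word. -/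
def barw (w : List L) : List L := w.map bar

/-- The eight rewrite rules of the Sub Rosa system:
`ab→ba`, `bā→āb`, `āb̄→b̄ā`, `b̄a→ab̄`, `aā→ε`, `āa→ε`, `bb̄→ε`, `b̄b→ε`. -/
def Rule : List L → List L → Prop := fun x y =>
  (x = [.a, .b] ∧ y = [.b, .a]) ∨ (x = [.b, .A] ∧ y = [.A, .b]) ∨
  (x = [.A, .B] ∧ y = [.B, .A]) ∨ (x = [.B, .a] ∧ y = [.a, .B]) ∨
  (x = [.a, .A] ∧ y = []) ∨ (x = [.A, .a] ∧ y = []) ∨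
  (x = [.b, .B] ∧ y = []) ∨ (x = [.B, .b] ∧ y = [])

/-- One rewrite step: replace a factor matching the left side of a rule by its right side. -/
def Step (u v : List L) : Prop :=
  ∃ p s x y, Rule x y ∧ u = p ++ x ++ s ∧ v = p ++ y ++ s

/-- `u →* v`: the reflexive transitive closure of the rewrite step. -/
def Steps : List L → List L → Prop := Relation.ReflTransGen Step

/-- `rep w n` is the `n`-fold concatenation `w^n`. -/
def rep (w : List L) (n : ℕ) : List L := (List.replicate n w).flatten

/-- A matching on a word pairs each occurrence of a letter with an occurrence of its
antiparallel letter, bijectively (an involution without fixed points). -/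
structure Matching (w : List L) where
  m : Fin w.length → Fin w.length
  invol : ∀ i, m (m i) = i
  nofix : ∀ i, m i ≠ i
  compat : ∀ i, w.get (m i) = bar (w.get i)

/-- The 4-tuples of letters that are cyclic rotations of `(a, b, ā, b̄)`. -/
def Rot4 : L → L → L → L → Prop := fun x y z t =>
  (x = .a ∧ y = .b ∧ z = .A ∧ t = .B) ∨ (x = .b ∧ y = .A ∧ z = .B ∧ t = .a) ∨
  (x = .A ∧ y = .B ∧ z = .a ∧ t = .b) ∨ (x = .B ∧ y = .a ∧ z = .b ∧ t = .A)

/-- The crossing condition: whenever two matched pairs interleave (cross) in the cyclic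
word, the four letters read in positional order form a cyclic rotation of `a, b, ā, b̄`. -/
def CrossOK {w : List L} (M : Matching w) : Prop :=
  ∀ i j i' j' : Fin w.length, i < j → j < i' → i' < j' →
    M.m i = i' → M.m j = j' →
    Rot4 (w.get i) (w.get j) (w.get i') (w.get j')

/-- A word admits a matching satisfying the crossing condition. -/
def GoodWord (w : List L) : Prop := ∃ M : Matching w, CrossOK M

/-- `u ⇒ v`: either a rewrite step, or the conjugation-with-flip `xy ⤳ y x̄`
(move a prefix to the end with all letters replaced by their antiparallels). -/
def FStep (u v : List L) : Prop :=
  Step u v ∨ ∃ x y, u = x ++ y ∧ v = y ++ barw x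

/-- `u ⇒* v`: the reflexive transitive closure of `⇒`. -/
def FSteps : List L → List L → Prop := Relation.ReflTransGen FStep


set_option maxHeartbeats 1000000

lemma rep_single (x : L) (n : ℕ) : rep [x] n = List.replicate n x := by
  induction n with
  | zero => rfl
  | succ n ih =>
    simp only [rep, List.replicate_succ, List.flatten_cons] at ih ⊢
    rw [ih]; rfl

lemma step_context {u v : List L} (p s : List L) (h : Step u v) :
    Step (p ++ u ++ s) (p ++ v ++ s) := by
  obtain ⟨p', s', x, y, hr, hu, hv⟩ := h
  exact ⟨p ++ p', s' ++ s, x, y, hr, by simp [hu], by simp [hv]⟩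

lemma steps_context {u v : List L} (p s : List L) (h : Steps u v) :
    Steps (p ++ u ++ s) (p ++ v ++ s) := by
  induction h with
  | refl => exact .refl
  | tail _ h2 ih => exact ih.tail (step_context p s h2)

lemma swap_one (m : ℕ) :
    Steps (L.a :: List.replicate m L.b) (List.replicate m L.b ++ [L.a]) := by
  induction m with
  | zero => exact .refl
  | succ m ih =>
    have h1 : Step (L.a :: List.replicate (m+1) L.b)
        (L.b :: L.a :: List.replicate m L.b) :=
      ⟨[], List.replicate m L.b, [.a, .b], [.b, .a], Or.inl ⟨rfl, rfl⟩,
        by simp [List.replicate_succ], by simp⟩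
    have h2 : Steps (L.b :: L.a :: List.replicate m L.b)
        (List.replicate (m+1) L.b ++ [L.a]) := by
      have := steps_context [L.b] ([] : List L) ih
      simpa [List.replicate_succ] using this
    exact Relation.ReflTransGen.head h1 h2

lemma swap_block (c m : ℕ) :
    Steps (List.replicate c L.a ++ List.replicate m L.b)
      (List.replicate m L.b ++ List.replicate c L.a) := by
  induction c with
  | zero => simp; exact .refl
  | succ c ih =>
    have h1 : Steps (L.a :: (List.replicate c L.a ++ List.replicate m L.b))
        (L.a :: (List.replicate m L.b ++ List.replicate c L.a)) := by
      have := steps_context [L.a] ([] : List L) ih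
      simpa using this
    have h2 : Steps ((L.a :: List.replicate m L.b) ++ List.replicate c L.a)
        ((List.replicate m L.b ++ [L.a]) ++ List.replicate c L.a) := by
      have := steps_context ([] : List L) (List.replicate c L.a) (swap_one m)
      simpa using this
    have h3 : Steps (List.replicate (c+1) L.a ++ List.replicate m L.b)
        ((List.replicate m L.b ++ [L.a]) ++ List.replicate c L.a) := by
      rw [List.replicate_succ]
      refine Relation.ReflTransGen.trans ?_ h2
      simpa [Steps] using h1
    have h4 : (List.replicate m L.b ++ [L.a]) ++ List.replicate c L.a
        = List.replicate m L.b ++ List.replicate (c+1) L.a := by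
      simp [List.replicate_succ, List.append_assoc]
    rwa [h4] at h3

def ff (i j k : ℕ) : ℕ :=
  if k < i then 2*i+j+3-k
  else if k = i then 2*i+2*j+7
  else if k = i+1 then i+j+2
  else if k < i+j+2 then 3*i+2*j+7-k
  else if k = i+j+2 then i+1
  else if k = i+j+3 then 2*i+j+4
  else if k < 2*i+j+4 then 2*i+j+3-k
  else if k = 2*i+j+4 then i+j+3
  else if k = 2*i+j+5 then 2*i+2*j+6
  else if k < 2*i+2*j+6 then 3*i+2*j+7-k
  else if k = 2*i+2*j+6 then 2*i+j+5
  else i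

def gg (i j k : ℕ) : L :=
  if k < i then .a
  else if k = i then .b
  else if k = i+1 then .a
  else if k < i+j+2 then .b
  else if k = i+j+2 then .A
  else if k = i+j+3 then .b
  else if k < 2*i+j+4 then .A
  else if k = 2*i+j+4 then .B
  else if k = 2*i+j+5 then .A
  else if k < 2*i+2*j+6 then .B
  else if k = 2*i+2*j+6 then .a
  else .B

lemma ff1 (i j k : ℕ) (h : k < i) : ff i j k = 2*i+j+3-k := by
  unfold ff; rw [if_pos (by omega)]
lemma ff2 (i j k : ℕ) (h : k = i) : ff i j k = 2*i+2*j+7 := by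
  unfold ff; rw [if_neg (by omega), if_pos (by omega)]
lemma ff3 (i j k : ℕ) (h : k = i+1) : ff i j k = i+j+2 := by
  unfold ff; rw [if_neg (by omega), if_neg (by omega), if_pos (by omega)]
lemma ff4 (i j k : ℕ) (h1 : i+2 ≤ k) (h2 : k < i+j+2) : ff i j k = 3*i+2*j+7-k := by
  unfold ff; rw [if_neg (by omega), if_neg (by omega), if_neg (by omega), if_pos (by omega)]
lemma ff5 (i j k : ℕ) (h : k = i+j+2) : ff i j k = i+1 := by
  unfold ff; rw [if_neg (by omega), if_neg (by omega), if_neg (by omega), if_neg (by omega), if_pos (by omega)]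
lemma ff6 (i j k : ℕ) (h : k = i+j+3) : ff i j k = 2*i+j+4 := by
  unfold ff; rw [if_neg (by omega), if_neg (by omega), if_neg (by omega), if_neg (by omega), if_neg (by omega), if_pos (by omega)]
lemma ff7 (i j k : ℕ) (h1 : i+j+4 ≤ k) (h2 : k < 2*i+j+4) : ff i j k = 2*i+j+3-k := by
  unfold ff; rw [if_neg (by omega), if_neg (by omega), if_neg (by omega), if_neg (by omega), if_neg (by omega), if_neg (by omega), if_pos (by omega)]
lemma ff8 (i j k : ℕ) (h : k = 2*i+j+4) : ff i j k = i+j+3 := by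
  unfold ff; rw [if_neg (by omega), if_neg (by omega), if_neg (by omega), if_neg (by omega), if_neg (by omega), if_neg (by omega), if_neg (by omega), if_pos (by omega)]
lemma ff9 (i j k : ℕ) (h : k = 2*i+j+5) : ff i j k = 2*i+2*j+6 := by
  unfold ff; rw [if_neg (by omega), if_neg (by omega), if_neg (by omega), if_neg (by omega), if_neg (by omega), if_neg (by omega), if_neg (by omega), if_neg (by omega), if_pos (by omega)]
lemma ff10 (i j k : ℕ) (h1 : 2*i+j+6 ≤ k) (h2 : k < 2*i+2*j+6) : ff i j k = 3*i+2*j+7-k := by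
  unfold ff; rw [if_neg (by omega), if_neg (by omega), if_neg (by omega), if_neg (by omega), if_neg (by omega), if_neg (by omega), if_neg (by omega), if_neg (by omega), if_neg (by omega), if_pos (by omega)]
lemma ff11 (i j k : ℕ) (h : k = 2*i+2*j+6) : ff i j k = 2*i+j+5 := by
  unfold ff; rw [if_neg (by omega), if_neg (by omega), if_neg (by omega), if_neg (by omega), if_neg (by omega), if_neg (by omega), if_neg (by omega), if_neg (by omega), if_neg (by omega), if_neg (by omega), if_pos (by omega)]
lemma ff12 (i j k : ℕ) (h : k = 2*i+2*j+7) : ff i j k = i := by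
  unfold ff; rw [if_neg (by omega), if_neg (by omega), if_neg (by omega), if_neg (by omega), if_neg (by omega), if_neg (by omega), if_neg (by omega), if_neg (by omega), if_neg (by omega), if_neg (by omega), if_neg (by omega)]
lemma gg1 (i j k : ℕ) (h : k < i) : gg i j k = .a := by
  unfold gg; rw [if_pos (by omega)]
lemma gg2 (i j k : ℕ) (h : k = i) : gg i j k = .b := by
  unfold gg; rw [if_neg (by omega), if_pos (by omega)]
lemma gg3 (i j k : ℕ) (h : k = i+1) : gg i j k = .a := by
  unfold gg; rw [if_neg (by omega), if_neg (by omega), if_pos (by omega)]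
lemma gg4 (i j k : ℕ) (h1 : i+2 ≤ k) (h2 : k < i+j+2) : gg i j k = .b := by
  unfold gg; rw [if_neg (by omega), if_neg (by omega), if_neg (by omega), if_pos (by omega)]
lemma gg5 (i j k : ℕ) (h : k = i+j+2) : gg i j k = .A := by
  unfold gg; rw [if_neg (by omega), if_neg (by omega), if_neg (by omega), if_neg (by omega), if_pos (by omega)]
lemma gg6 (i j k : ℕ) (h : k = i+j+3) : gg i j k = .b := by
  unfold gg; rw [if_neg (by omega), if_neg (by omega), if_neg (by omega), if_neg (by omega), if_neg (by omega), if_pos (by omega)]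
lemma gg7 (i j k : ℕ) (h1 : i+j+4 ≤ k) (h2 : k < 2*i+j+4) : gg i j k = .A := by
  unfold gg; rw [if_neg (by omega), if_neg (by omega), if_neg (by omega), if_neg (by omega), if_neg (by omega), if_neg (by omega), if_pos (by omega)]
lemma gg8 (i j k : ℕ) (h : k = 2*i+j+4) : gg i j k = .B := by
  unfold gg; rw [if_neg (by omega), if_neg (by omega), if_neg (by omega), if_neg (by omega), if_neg (by omega), if_neg (by omega), if_neg (by omega), if_pos (by omega)]
lemma gg9 (i j k : ℕ) (h : k = 2*i+j+5) : gg i j k = .A := by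
  unfold gg; rw [if_neg (by omega), if_neg (by omega), if_neg (by omega), if_neg (by omega), if_neg (by omega), if_neg (by omega), if_neg (by omega), if_neg (by omega), if_pos (by omega)]
lemma gg10 (i j k : ℕ) (h1 : 2*i+j+6 ≤ k) (h2 : k < 2*i+2*j+6) : gg i j k = .B := by
  unfold gg; rw [if_neg (by omega), if_neg (by omega), if_neg (by omega), if_neg (by omega), if_neg (by omega), if_neg (by omega), if_neg (by omega), if_neg (by omega), if_neg (by omega), if_pos (by omega)]
lemma gg11 (i j k : ℕ) (h : k = 2*i+2*j+6) : gg i j k = .a := by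
  unfold gg; rw [if_neg (by omega), if_neg (by omega), if_neg (by omega), if_neg (by omega), if_neg (by omega), if_neg (by omega), if_neg (by omega), if_neg (by omega), if_neg (by omega), if_neg (by omega), if_pos (by omega)]
lemma gg12 (i j k : ℕ) (h : k = 2*i+2*j+7) : gg i j k = .B := by
  unfold gg; rw [if_neg (by omega), if_neg (by omega), if_neg (by omega), if_neg (by omega), if_neg (by omega), if_neg (by omega), if_neg (by omega), if_neg (by omega), if_neg (by omega), if_neg (by omega), if_neg (by omega)]

lemma ff_lt (i j k : ℕ) (hk : k < 2*i+2*j+8) : ff i j k < 2*i+2*j+8 := by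
  rcases (by omega : k < i ∨ k = i ∨ k = i+1 ∨ (i+2 ≤ k ∧ k < i+j+2) ∨ k = i+j+2 ∨ k = i+j+3 ∨
    (i+j+4 ≤ k ∧ k < 2*i+j+4) ∨ k = 2*i+j+4 ∨ k = 2*i+j+5 ∨ (2*i+j+6 ≤ k ∧ k < 2*i+2*j+6) ∨
    k = 2*i+2*j+6 ∨ k = 2*i+2*j+7) with h|h|h|h|h|h|h|h|h|h|h|h
  · rw [ff1 i j k h]; omega
  · rw [ff2 i j k h]; omega
  · rw [ff3 i j k h]; omega
  · rw [ff4 i j k h.1 h.2]; omega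
  · rw [ff5 i j k h]; omega
  · rw [ff6 i j k h]; omega
  · rw [ff7 i j k h.1 h.2]; omega
  · rw [ff8 i j k h]; omega
  · rw [ff9 i j k h]; omega
  · rw [ff10 i j k h.1 h.2]; omega
  · rw [ff11 i j k h]; omega
  · rw [ff12 i j k h]; omega

def W (i j : ℕ) : List L :=
  (rep [L.a] i ++ [L.b, L.a] ++ rep [L.b] j ++ [L.A, L.b])
    ++ barw (rep [L.a] i ++ [L.b, L.a] ++ rep [L.b] j ++ [L.A, L.b])

lemma W_eq (i j : ℕ) : W i j =
    List.replicate i L.a ++ ([L.b] ++ ([L.a] ++ (List.replicate j L.b ++ ([L.A] ++ ([L.b] ++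
      (List.replicate i L.A ++ ([L.B] ++ ([L.A] ++ (List.replicate j L.B ++
        ([L.a] ++ [L.B])))))))))) := by
  simp [W, rep_single, barw, bar]

lemma W_len (i j : ℕ) : (W i j).length = 2*i+2*j+8 := by
  simp [W_eq]; omega

set_option maxHeartbeats 4000000 in
lemma W_get (i j k : ℕ) (hk : k < 2*i+2*j+8) :
    (W i j)[k]'(by rw [W_len]; exact hk) = gg i j k := by
  simp only [W_eq]
  rcases (by omega : k < i ∨ k = i ∨ k = i+1 ∨ (i+2 ≤ k ∧ k < i+j+2) ∨ k = i+j+2 ∨ k = i+j+3 ∨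
    (i+j+4 ≤ k ∧ k < 2*i+j+4) ∨ k = 2*i+j+4 ∨ k = 2*i+j+5 ∨ (2*i+j+6 ≤ k ∧ k < 2*i+2*j+6) ∨
    k = 2*i+2*j+6 ∨ k = 2*i+2*j+7) with h|h|h|h|h|h|h|h|h|h|h|h
  · rw [List.getElem_append_left (by simp; omega),
        List.getElem_replicate,
        gg1 i j k h]
  · rw [List.getElem_append_right (by simp; omega),
        List.getElem_append_left (by simp; omega),
        List.getElem_singleton,
        gg2 i j k h]
  · rw [List.getElem_append_right (by simp; omega),
        List.getElem_append_right (by simp; omega),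
        List.getElem_append_left (by simp; omega),
        List.getElem_singleton,
        gg3 i j k h]
  · rw [List.getElem_append_right (by simp; omega),
        List.getElem_append_right (by simp; omega),
        List.getElem_append_right (by simp; omega),
        List.getElem_append_left (by simp; omega),
        List.getElem_replicate,
        gg4 i j k h.1 h.2]
  · rw [List.getElem_append_right (by simp; omega),
        List.getElem_append_right (by simp; omega),
        List.getElem_append_right (by simp; omega),
        List.getElem_append_right (by simp; omega),
        List.getElem_append_left (by simp; omega),
        List.getElem_singleton,
        gg5 i j k h]
  · rw [List.getElem_append_right (by simp; omega),
        List.getElem_append_right (by simp; omega),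
        List.getElem_append_right (by simp; omega),
        List.getElem_append_right (by simp; omega),
        List.getElem_append_right (by simp; omega),
        List.getElem_append_left (by simp; omega),
        List.getElem_singleton,
        gg6 i j k h]
  · rw [List.getElem_append_right (by simp; omega),
        List.getElem_append_right (by simp; omega),
        List.getElem_append_right (by simp; omega),
        List.getElem_append_right (by simp; omega),
        List.getElem_append_right (by simp; omega),
        List.getElem_append_right (by simp; omega),
        List.getElem_append_left (by simp; omega),
        List.getElem_replicate,
        gg7 i j k h.1 h.2]
  · rw [List.getElem_append_right (by simp; omega),
        List.getElem_append_right (by simp; omega),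
        List.getElem_append_right (by simp; omega),
        List.getElem_append_right (by simp; omega),
        List.getElem_append_right (by simp; omega),
        List.getElem_append_right (by simp; omega),
        List.getElem_append_right (by simp; omega),
        List.getElem_append_left (by simp; omega),
        List.getElem_singleton,
        gg8 i j k h]
  · rw [List.getElem_append_right (by simp; omega),
        List.getElem_append_right (by simp; omega),
        List.getElem_append_right (by simp; omega),
        List.getElem_append_right (by simp; omega),
        List.getElem_append_right (by simp; omega),
        List.getElem_append_right (by simp; omega),
        List.getElem_append_right (by simp; omega),
        List.getElem_append_right (by simp; omega),
        List.getElem_append_left (by simp; omega),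
        List.getElem_singleton,
        gg9 i j k h]
  · rw [List.getElem_append_right (by simp; omega),
        List.getElem_append_right (by simp; omega),
        List.getElem_append_right (by simp; omega),
        List.getElem_append_right (by simp; omega),
        List.getElem_append_right (by simp; omega),
        List.getElem_append_right (by simp; omega),
        List.getElem_append_right (by simp; omega),
        List.getElem_append_right (by simp; omega),
        List.getElem_append_right (by simp; omega),
        List.getElem_append_left (by simp; omega),
        List.getElem_replicate,
        gg10 i j k h.1 h.2]
  · rw [List.getElem_append_right (by simp; omega),
        List.getElem_append_right (by simp; omega),
        List.getElem_append_right (by simp; omega),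
        List.getElem_append_right (by simp; omega),
        List.getElem_append_right (by simp; omega),
        List.getElem_append_right (by simp; omega),
        List.getElem_append_right (by simp; omega),
        List.getElem_append_right (by simp; omega),
        List.getElem_append_right (by simp; omega),
        List.getElem_append_right (by simp; omega),
        List.getElem_append_left (by simp; omega),
        List.getElem_singleton,
        gg11 i j k h]
  · rw [List.getElem_append_right (by simp; omega),
        List.getElem_append_right (by simp; omega),
        List.getElem_append_right (by simp; omega),
        List.getElem_append_right (by simp; omega),
        List.getElem_append_right (by simp; omega),
        List.getElem_append_right (by simp; omega),
        List.getElem_append_right (by simp; omega),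
        List.getElem_append_right (by simp; omega),
        List.getElem_append_right (by simp; omega),
        List.getElem_append_right (by simp; omega),
        List.getElem_append_right (by simp; omega),
        List.getElem_singleton,
        gg12 i j k h]

lemma W_get' (i j : ℕ) (p : Fin (W i j).length) : (W i j).get p = gg i j ↑p := by
  have hk : (p:ℕ) < 2*i+2*j+8 := by rw [← W_len i j]; exact p.isLt
  rw [List.get_eq_getElem]
  exact W_get i j ↑p hk

def MM (i j : ℕ) : Matching (W i j) where
  m := fun p => ⟨ff i j ↑p, lt_of_lt_of_eq (ff_lt i j ↑p (lt_of_lt_of_eq p.isLt (W_len i j))) (W_len i j).symm⟩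
  invol := by
    intro p
    have hk : (p:ℕ) < 2*i+2*j+8 := by rw [← W_len i j]; exact p.isLt
    apply Fin.ext
    show ff i j (ff i j ↑p) = ↑p
    rcases (by omega : ((p):ℕ) < i ∨ ((p):ℕ) = i ∨ ((p):ℕ) = i+1 ∨ (i+2 ≤ ((p):ℕ) ∧ ((p):ℕ) < i+j+2) ∨ ((p):ℕ) = i+j+2 ∨ ((p):ℕ) = i+j+3 ∨
    (i+j+4 ≤ ((p):ℕ) ∧ ((p):ℕ) < 2*i+j+4) ∨ ((p):ℕ) = 2*i+j+4 ∨ ((p):ℕ) = 2*i+j+5 ∨ (2*i+j+6 ≤ ((p):ℕ) ∧ ((p):ℕ) < 2*i+2*j+6) ∨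
    ((p):ℕ) = 2*i+2*j+6 ∨ ((p):ℕ) = 2*i+2*j+7) with h|h|h|h|h|h|h|h|h|h|h|h
    · rw [ff1 i j ↑p h, ff7 i j (2*i+j+3-↑p) (by omega) (by omega)]; omega
    · rw [ff2 i j ↑p h, ff12 i j (2*i+2*j+7) (by omega)]; omega
    · rw [ff3 i j ↑p h, ff5 i j (i+j+2) (by omega)]; omega
    · rw [ff4 i j ↑p h.1 h.2, ff10 i j (3*i+2*j+7-↑p) (by omega) (by omega)]; omega
    · rw [ff5 i j ↑p h, ff3 i j (i+1) (by omega)]; omega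
    · rw [ff6 i j ↑p h, ff8 i j (2*i+j+4) (by omega)]; omega
    · rw [ff7 i j ↑p h.1 h.2, ff1 i j (2*i+j+3-↑p) (by omega)]; omega
    · rw [ff8 i j ↑p h, ff6 i j (i+j+3) (by omega)]; omega
    · rw [ff9 i j ↑p h, ff11 i j (2*i+2*j+6) (by omega)]; omega
    · rw [ff10 i j ↑p h.1 h.2, ff4 i j (3*i+2*j+7-↑p) (by omega) (by omega)]; omega
    · rw [ff11 i j ↑p h, ff9 i j (2*i+j+5) (by omega)]; omega
    · rw [ff12 i j ↑p h, ff2 i j i rfl]; omega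
  nofix := by
    intro p hp
    have hk : (p:ℕ) < 2*i+2*j+8 := by rw [← W_len i j]; exact p.isLt
    have hv : ff i j ↑p = ↑p := congrArg Fin.val hp
    rcases (by omega : ((p):ℕ) < i ∨ ((p):ℕ) = i ∨ ((p):ℕ) = i+1 ∨ (i+2 ≤ ((p):ℕ) ∧ ((p):ℕ) < i+j+2) ∨ ((p):ℕ) = i+j+2 ∨ ((p):ℕ) = i+j+3 ∨
    (i+j+4 ≤ ((p):ℕ) ∧ ((p):ℕ) < 2*i+j+4) ∨ ((p):ℕ) = 2*i+j+4 ∨ ((p):ℕ) = 2*i+j+5 ∨ (2*i+j+6 ≤ ((p):ℕ) ∧ ((p):ℕ) < 2*i+2*j+6) ∨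
    ((p):ℕ) = 2*i+2*j+6 ∨ ((p):ℕ) = 2*i+2*j+7) with h|h|h|h|h|h|h|h|h|h|h|h <;>
      [rw [ff1 i j ↑p h] at hv; rw [ff2 i j ↑p h] at hv; rw [ff3 i j ↑p h] at hv;
       rw [ff4 i j ↑p h.1 h.2] at hv; rw [ff5 i j ↑p h] at hv; rw [ff6 i j ↑p h] at hv;
       rw [ff7 i j ↑p h.1 h.2] at hv; rw [ff8 i j ↑p h] at hv; rw [ff9 i j ↑p h] at hv;
       rw [ff10 i j ↑p h.1 h.2] at hv; rw [ff11 i j ↑p h] at hv; rw [ff12 i j ↑p h] at hv] <;>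
      omega
  compat := by
    intro p
    have hk : (p:ℕ) < 2*i+2*j+8 := by rw [← W_len i j]; exact p.isLt
    rw [W_get' i j, W_get' i j p]
    show gg i j (ff i j ↑p) = bar (gg i j ↑p)
    rcases (by omega : ((p):ℕ) < i ∨ ((p):ℕ) = i ∨ ((p):ℕ) = i+1 ∨ (i+2 ≤ ((p):ℕ) ∧ ((p):ℕ) < i+j+2) ∨ ((p):ℕ) = i+j+2 ∨ ((p):ℕ) = i+j+3 ∨
    (i+j+4 ≤ ((p):ℕ) ∧ ((p):ℕ) < 2*i+j+4) ∨ ((p):ℕ) = 2*i+j+4 ∨ ((p):ℕ) = 2*i+j+5 ∨ (2*i+j+6 ≤ ((p):ℕ) ∧ ((p):ℕ) < 2*i+2*j+6) ∨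
    ((p):ℕ) = 2*i+2*j+6 ∨ ((p):ℕ) = 2*i+2*j+7) with h|h|h|h|h|h|h|h|h|h|h|h
    · rw [ff1 i j ↑p h, gg7 i j (2*i+j+3-↑p) (by omega) (by omega), gg1 i j ↑p h]; rfl
    · rw [ff2 i j ↑p h, gg12 i j (2*i+2*j+7) (by omega), gg2 i j ↑p h]; rfl
    · rw [ff3 i j ↑p h, gg5 i j (i+j+2) (by omega), gg3 i j ↑p h]; rfl
    · rw [ff4 i j ↑p h.1 h.2, gg10 i j (3*i+2*j+7-↑p) (by omega) (by omega), gg4 i j ↑p h.1 h.2]; rfl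
    · rw [ff5 i j ↑p h, gg3 i j (i+1) (by omega), gg5 i j ↑p h]; rfl
    · rw [ff6 i j ↑p h, gg8 i j (2*i+j+4) (by omega), gg6 i j ↑p h]; rfl
    · rw [ff7 i j ↑p h.1 h.2, gg1 i j (2*i+j+3-↑p) (by omega), gg7 i j ↑p h.1 h.2]; rfl
    · rw [ff8 i j ↑p h, gg6 i j (i+j+3) (by omega), gg8 i j ↑p h]; rfl
    · rw [ff9 i j ↑p h, gg11 i j (2*i+2*j+6) (by omega), gg9 i j ↑p h]; rfl
    · rw [ff10 i j ↑p h.1 h.2, gg4 i j (3*i+2*j+7-↑p) (by omega) (by omega), gg10 i j ↑p h.1 h.2]; rfl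
    · rw [ff11 i j ↑p h, gg9 i j (2*i+j+5) (by omega), gg11 i j ↑p h]; rfl
    · rw [ff12 i j ↑p h, gg2 i j i rfl, gg12 i j ↑p h]; rfl

lemma MM_cross (i j : ℕ) : CrossOK (MM i j) := by
  intro p q p' q' hpq hqp' hp'q' hmp hmq
  have hp : (p:ℕ) < 2*i+2*j+8 := by rw [← W_len i j]; exact p.isLt
  have hq : (q:ℕ) < 2*i+2*j+8 := by rw [← W_len i j]; exact q.isLt
  have hp2 : (p':ℕ) < 2*i+2*j+8 := by rw [← W_len i j]; exact p'.isLt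
  have hq2 : (q':ℕ) < 2*i+2*j+8 := by rw [← W_len i j]; exact q'.isLt
  have h1 : (p:ℕ) < ↑q := hpq
  have h2 : (q:ℕ) < ↑p' := hqp'
  have h3 : (p':ℕ) < ↑q' := hp'q'
  have hvp : ff i j ↑p = ↑p' := congrArg Fin.val hmp
  have hvq : ff i j ↑q = ↑q' := congrArg Fin.val hmq
  rw [W_get' i j p, W_get' i j q, W_get' i j p', W_get' i j q', ← hvp, ← hvq]
  rcases (by omega : ((p):ℕ) < i ∨ ((p):ℕ) = i ∨ ((p):ℕ) = i+1 ∨ (i+2 ≤ ((p):ℕ) ∧ ((p):ℕ) < i+j+2) ∨ ((p):ℕ) = i+j+2 ∨ ((p):ℕ) = i+j+3 ∨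
    (i+j+4 ≤ ((p):ℕ) ∧ ((p):ℕ) < 2*i+j+4) ∨ ((p):ℕ) = 2*i+j+4 ∨ ((p):ℕ) = 2*i+j+5 ∨ (2*i+j+6 ≤ ((p):ℕ) ∧ ((p):ℕ) < 2*i+2*j+6) ∨
    ((p):ℕ) = 2*i+2*j+6 ∨ ((p):ℕ) = 2*i+2*j+7) with h|h|h|h|h|h|h|h|h|h|h|h
  · rw [ff1 i j ↑p h] at hvp ⊢
    rcases (by omega : ((q):ℕ) < i ∨ ((q):ℕ) = i ∨ ((q):ℕ) = i+1 ∨ (i+2 ≤ ((q):ℕ) ∧ ((q):ℕ) < i+j+2) ∨ ((q):ℕ) = i+j+2 ∨ ((q):ℕ) = i+j+3 ∨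
    (i+j+4 ≤ ((q):ℕ) ∧ ((q):ℕ) < 2*i+j+4) ∨ ((q):ℕ) = 2*i+j+4 ∨ ((q):ℕ) = 2*i+j+5 ∨ (2*i+j+6 ≤ ((q):ℕ) ∧ ((q):ℕ) < 2*i+2*j+6) ∨
    ((q):ℕ) = 2*i+2*j+6 ∨ ((q):ℕ) = 2*i+2*j+7) with g|g|g|g|g|g|g|g|g|g|g|g
    · rw [ff1 i j ↑q g] at hvq; omega
    · rw [ff2 i j ↑q g, gg1 i j ↑p h, gg2 i j ↑q g,
          gg7 i j (2*i+j+3-↑p) (by omega) (by omega), gg12 i j (2*i+2*j+7) (by omega)]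
      exact Or.inl ⟨rfl, rfl, rfl, rfl⟩
    · rw [ff3 i j ↑q g] at hvq; omega
    · rw [ff4 i j ↑q g.1 g.2, gg1 i j ↑p h, gg4 i j ↑q g.1 g.2,
          gg7 i j (2*i+j+3-↑p) (by omega) (by omega),
          gg10 i j (3*i+2*j+7-↑q) (by omega) (by omega)]
      exact Or.inl ⟨rfl, rfl, rfl, rfl⟩
    · rw [ff5 i j ↑q g] at hvq; omega
    · rw [ff6 i j ↑q g, gg1 i j ↑p h, gg6 i j ↑q g,
          gg7 i j (2*i+j+3-↑p) (by omega) (by omega), gg8 i j (2*i+j+4) (by omega)]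
      exact Or.inl ⟨rfl, rfl, rfl, rfl⟩
    · rw [ff7 i j ↑q g.1 g.2] at hvq; omega
    · rw [ff8 i j ↑q g] at hvq; omega
    · rw [ff9 i j ↑q g] at hvq; omega
    · rw [ff10 i j ↑q g.1 g.2] at hvq; omega
    · rw [ff11 i j ↑q g] at hvq; omega
    · rw [ff12 i j ↑q g] at hvq; omega
  · rw [ff2 i j ↑p h] at hvp; omega
  · rw [ff3 i j ↑p h] at hvp ⊢
    rcases (by omega : ((q):ℕ) < i ∨ ((q):ℕ) = i ∨ ((q):ℕ) = i+1 ∨ (i+2 ≤ ((q):ℕ) ∧ ((q):ℕ) < i+j+2) ∨ ((q):ℕ) = i+j+2 ∨ ((q):ℕ) = i+j+3 ∨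
    (i+j+4 ≤ ((q):ℕ) ∧ ((q):ℕ) < 2*i+j+4) ∨ ((q):ℕ) = 2*i+j+4 ∨ ((q):ℕ) = 2*i+j+5 ∨ (2*i+j+6 ≤ ((q):ℕ) ∧ ((q):ℕ) < 2*i+2*j+6) ∨
    ((q):ℕ) = 2*i+2*j+6 ∨ ((q):ℕ) = 2*i+2*j+7) with g|g|g|g|g|g|g|g|g|g|g|g
    · rw [ff1 i j ↑q g] at hvq; omega
    · rw [ff2 i j ↑q g] at hvq; omega
    · rw [ff3 i j ↑q g] at hvq; omega
    · rw [ff4 i j ↑q g.1 g.2, gg3 i j ↑p h, gg4 i j ↑q g.1 g.2,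
          gg5 i j (i+j+2) (by omega), gg10 i j (3*i+2*j+7-↑q) (by omega) (by omega)]
      exact Or.inl ⟨rfl, rfl, rfl, rfl⟩
    · rw [ff5 i j ↑q g] at hvq; omega
    · rw [ff6 i j ↑q g] at hvq; omega
    · rw [ff7 i j ↑q g.1 g.2] at hvq; omega
    · rw [ff8 i j ↑q g] at hvq; omega
    · rw [ff9 i j ↑q g] at hvq; omega
    · rw [ff10 i j ↑q g.1 g.2] at hvq; omega
    · rw [ff11 i j ↑q g] at hvq; omega
    · rw [ff12 i j ↑q g] at hvq; omega
  · rw [ff4 i j ↑p h.1 h.2] at hvp ⊢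
    rcases (by omega : ((q):ℕ) < i ∨ ((q):ℕ) = i ∨ ((q):ℕ) = i+1 ∨ (i+2 ≤ ((q):ℕ) ∧ ((q):ℕ) < i+j+2) ∨ ((q):ℕ) = i+j+2 ∨ ((q):ℕ) = i+j+3 ∨
    (i+j+4 ≤ ((q):ℕ) ∧ ((q):ℕ) < 2*i+j+4) ∨ ((q):ℕ) = 2*i+j+4 ∨ ((q):ℕ) = 2*i+j+5 ∨ (2*i+j+6 ≤ ((q):ℕ) ∧ ((q):ℕ) < 2*i+2*j+6) ∨
    ((q):ℕ) = 2*i+2*j+6 ∨ ((q):ℕ) = 2*i+2*j+7) with g|g|g|g|g|g|g|g|g|g|g|g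
    · rw [ff1 i j ↑q g] at hvq; omega
    · rw [ff2 i j ↑q g] at hvq; omega
    · rw [ff3 i j ↑q g] at hvq; omega
    · rw [ff4 i j ↑q g.1 g.2] at hvq; omega
    · rw [ff5 i j ↑q g] at hvq; omega
    · rw [ff6 i j ↑q g] at hvq; omega
    · rw [ff7 i j ↑q g.1 g.2] at hvq; omega
    · rw [ff8 i j ↑q g] at hvq; omega
    · rw [ff9 i j ↑q g, gg4 i j ↑p h.1 h.2, gg9 i j ↑q g,
          gg10 i j (3*i+2*j+7-↑p) (by omega) (by omega), gg11 i j (2*i+2*j+6) (by omega)]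
      exact Or.inr (Or.inl ⟨rfl, rfl, rfl, rfl⟩)
    · rw [ff10 i j ↑q g.1 g.2] at hvq; omega
    · rw [ff11 i j ↑q g] at hvq; omega
    · rw [ff12 i j ↑q g] at hvq; omega
  · rw [ff5 i j ↑p h] at hvp; omega
  · rw [ff6 i j ↑p h] at hvp ⊢
    rcases (by omega : ((q):ℕ) < i ∨ ((q):ℕ) = i ∨ ((q):ℕ) = i+1 ∨ (i+2 ≤ ((q):ℕ) ∧ ((q):ℕ) < i+j+2) ∨ ((q):ℕ) = i+j+2 ∨ ((q):ℕ) = i+j+3 ∨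
    (i+j+4 ≤ ((q):ℕ) ∧ ((q):ℕ) < 2*i+j+4) ∨ ((q):ℕ) = 2*i+j+4 ∨ ((q):ℕ) = 2*i+j+5 ∨ (2*i+j+6 ≤ ((q):ℕ) ∧ ((q):ℕ) < 2*i+2*j+6) ∨
    ((q):ℕ) = 2*i+2*j+6 ∨ ((q):ℕ) = 2*i+2*j+7) with g|g|g|g|g|g|g|g|g|g|g|g
    · rw [ff1 i j ↑q g] at hvq; omega
    · rw [ff2 i j ↑q g] at hvq; omega
    · rw [ff3 i j ↑q g] at hvq; omega
    · rw [ff4 i j ↑q g.1 g.2] at hvq; omega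
    · rw [ff5 i j ↑q g] at hvq; omega
    · rw [ff6 i j ↑q g] at hvq; omega
    · rw [ff7 i j ↑q g.1 g.2] at hvq; omega
    · rw [ff8 i j ↑q g] at hvq; omega
    · rw [ff9 i j ↑q g] at hvq; omega
    · rw [ff10 i j ↑q g.1 g.2] at hvq; omega
    · rw [ff11 i j ↑q g] at hvq; omega
    · rw [ff12 i j ↑q g] at hvq; omega
  · rw [ff7 i j ↑p h.1 h.2] at hvp; omega
  · rw [ff8 i j ↑p h] at hvp; omega
  · rw [ff9 i j ↑p h] at hvp ⊢
    rcases (by omega : ((q):ℕ) < i ∨ ((q):ℕ) = i ∨ ((q):ℕ) = i+1 ∨ (i+2 ≤ ((q):ℕ) ∧ ((q):ℕ) < i+j+2) ∨ ((q):ℕ) = i+j+2 ∨ ((q):ℕ) = i+j+3 ∨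
    (i+j+4 ≤ ((q):ℕ) ∧ ((q):ℕ) < 2*i+j+4) ∨ ((q):ℕ) = 2*i+j+4 ∨ ((q):ℕ) = 2*i+j+5 ∨ (2*i+j+6 ≤ ((q):ℕ) ∧ ((q):ℕ) < 2*i+2*j+6) ∨
    ((q):ℕ) = 2*i+2*j+6 ∨ ((q):ℕ) = 2*i+2*j+7) with g|g|g|g|g|g|g|g|g|g|g|g
    · rw [ff1 i j ↑q g] at hvq; omega
    · rw [ff2 i j ↑q g] at hvq; omega
    · rw [ff3 i j ↑q g] at hvq; omega
    · rw [ff4 i j ↑q g.1 g.2] at hvq; omega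
    · rw [ff5 i j ↑q g] at hvq; omega
    · rw [ff6 i j ↑q g] at hvq; omega
    · rw [ff7 i j ↑q g.1 g.2] at hvq; omega
    · rw [ff8 i j ↑q g] at hvq; omega
    · rw [ff9 i j ↑q g] at hvq; omega
    · rw [ff10 i j ↑q g.1 g.2] at hvq; omega
    · rw [ff11 i j ↑q g] at hvq; omega
    · rw [ff12 i j ↑q g] at hvq; omega
  · rw [ff10 i j ↑p h.1 h.2] at hvp; omega
  · rw [ff11 i j ↑p h] at hvp; omega
  · rw [ff12 i j ↑p h] at hvp; omega

/-- Case 1(b): the word `u = a^i · ba · b^j · āb` satisfies `u ⇒* a^i b^{j+2}`, which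
rewrites by `→*` to its reversal `b^{j+2} a^i`; hence `u·ū` satisfies the crossing
condition. -/
theorem subrosa_case1b (i j : ℕ) :
    FSteps (rep [L.a] i ++ [L.b, L.a] ++ rep [L.b] j ++ [L.A, L.b])
        (rep [L.a] i ++ rep [L.b] (j + 2)) ∧
    Steps (rep [L.a] i ++ rep [L.b] (j + 2)) (rep [L.b] (j + 2) ++ rep [L.a] i) ∧
    rep [L.b] (j + 2) ++ rep [L.a] i = (rep [L.a] i ++ rep [L.b] (j + 2)).reverse ∧
    GoodWord ((rep [L.a] i ++ [L.b, L.a] ++ rep [L.b] j ++ [L.A, L.b])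
      ++ barw (rep [L.a] i ++ [L.b, L.a] ++ rep [L.b] j ++ [L.A, L.b])) := by
  have e1 : rep [L.a] i = List.replicate i L.a := rep_single _ _
  have e2 : rep [L.b] j = List.replicate j L.b := rep_single _ _
  have e3 : rep [L.b] (j+2) = List.replicate (j+2) L.b := rep_single _ _
  have hrep : List.replicate (j+2) L.b = L.b :: (List.replicate j L.b ++ [L.b]) := by
    rw [show j+2 = 1+j+1 from by omega, List.replicate_succ', List.replicate_add]
    simp
  refine ⟨?_, ?_, ?_, ?_⟩
  · apply Relation.ReflTransGen.mono (fun _ _ h => Or.inl h)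
    show Steps _ _
    rw [e1, e2, e3, hrep]
    have s1 : Steps
        (List.replicate i L.a ++ [L.b, L.a] ++ List.replicate j L.b ++ [L.A, L.b])
        ((List.replicate i L.a ++ [L.b]) ++ (List.replicate j L.b ++ [L.a]) ++ [L.A, L.b]) := by
      have := steps_context (List.replicate i L.a ++ [L.b]) [L.A, L.b] (swap_one j)
      refine (by simp : (List.replicate i L.a ++ [L.b, L.a] ++ List.replicate j L.b ++ [L.A, L.b])
        = (List.replicate i L.a ++ [L.b]) ++ (L.a :: List.replicate j L.b) ++ [L.A, L.b]) ▸ this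
    have s2 : Step
        ((List.replicate i L.a ++ [L.b]) ++ (List.replicate j L.b ++ [L.a]) ++ [L.A, L.b])
        (List.replicate i L.a ++ (L.b :: (List.replicate j L.b ++ [L.b]))) := by
      refine ⟨(List.replicate i L.a ++ [L.b]) ++ List.replicate j L.b, [L.b], [L.a, L.A], [],
        Or.inr (Or.inr (Or.inr (Or.inr (Or.inl ⟨rfl, rfl⟩)))), by simp, by simp⟩
    exact s1.tail s2
  · rw [e1, e3]
    exact swap_block i (j+2)
  · rw [e1, e3]
    simp [List.reverse_append, List.reverse_replicate]
  · exact ⟨MM i j, MM_cross i j⟩
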